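/- Uniqueness of the first-best first-order-condition root: for every A ∈ (0,1), the function γ(p) = A²/2 − A + 1 − 2/(3p) + 2p − (3/2)p² has exactly one zero p in the interval (0,1), and this zero satisfies 0.1 < p < √3/3. -/
import Mathlib


/-- The function arising from the first-order conditions of the multiproduct
seller's problem under uniform match utilities with reservation value `A`. -/
noncomputable def gammaFB (A p : ℝ) : ℝ := A^2/2 - A + 1 - 2/(3*p) + 2*p - (3/2)*p^2

/-- Uniqueness of the first-best first-order-condition root: for every
`A ∈ (0,1)`, `γ` has exactly one zero in `(0,1)`, and this zero lies in
`(0.1, √3/3)`. -/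
theorem gammaFB_unique_root
    (A : ℝ) (hA : A ∈ Set.Ioo (0:ℝ) 1) :
    (∃! p : ℝ, p ∈ Set.Ioo (0:ℝ) 1 ∧ gammaFB A p = 0)
      ∧ (∀ p ∈ Set.Ioo (0:ℝ) 1, gammaFB A p = 0 →
            0.1 < p ∧ p < Real.sqrt 3 / 3) := by
  obtain ⟨hA0, hA1⟩ := hA
  set c : ℝ := A^2/2 - A + 1 with hc_def
  have hc : 1/2 < c := by nlinarith [sq_nonneg (A-1)]
  have hc1 : c < 1 := by rw [hc_def]; nlinarith [mul_pos hA0 (show (0:ℝ) < 2 - A by linarith)]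
  set H : ℝ → ℝ := fun p => c*p - 2/3 + 2*p^2 - (3/2)*p^3 with hH
  have key : ∀ p ∈ Set.Ioo (0:ℝ) 1, (gammaFB A p = 0 ↔ H p = 0) := by
    intro p hp
    have hp0 := hp.1
    have heq : p * gammaFB A p = H p := by
      simp only [gammaFB, hH]
      field_simp
      ring
    constructor
    · intro h
      rw [h, mul_zero] at heq; exact heq.symm
    · intro h
      rw [h] at heq
      rcases mul_eq_zero.1 heq with h' | h'
      · exact absurd h' (ne_of_gt hp0)
      · exact h'
  have hmono : StrictMonoOn H (Set.Icc (0:ℝ) 1) := by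
    intro p hp q hq hpq
    obtain ⟨hp0, hp1⟩ := hp
    obtain ⟨hq0, hq1⟩ := hq
    simp only [hH]
    nlinarith [mul_nonneg (sub_pos.2 hpq).le (mul_nonneg hp0 hq0), sq_nonneg (p-q), sq_nonneg (p+q),
      mul_nonneg (mul_nonneg (sub_pos.2 hpq).le (sub_nonneg.2 hp1)) (sub_nonneg.2 hq1),
      mul_nonneg (mul_nonneg (sub_pos.2 hpq).le hp0) (sub_nonneg.2 hq1),
      mul_nonneg (mul_nonneg (sub_pos.2 hpq).le hq0) (sub_nonneg.2 hp1)]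
  set s : ℝ := Real.sqrt 3 / 3 with hs_def
  have hs2 : s^2 = 1/3 := by
    simp only [hs_def]
    rw [div_pow, Real.sq_sqrt (by norm_num : (0:ℝ) ≤ 3)]
    norm_num
  have hs_pos : 0 < s := by
    simp only [hs_def]; positivity
  have hs_lt : s < 1 := by nlinarith
  have hs_gt : (0.1:ℝ) < s := by nlinarith
  have hHs_pos : 0 < H s := by
    have hHs : H s = s * (c - 1/2) := by
      simp only [hH]
      linear_combination (2 - (3/2)*s) * hs2
    rw [hHs]
    exact mul_pos hs_pos (by linarith)
  have hH01_neg : H 0.1 < 0 := by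
    simp only [hH]
    nlinarith
  have hcont : ContinuousOn H (Set.Icc (0.1:ℝ) s) := by
    simp only [hH]
    fun_prop
  have hmem : (0:ℝ) ∈ Set.Ioo (H 0.1) (H s) := ⟨hH01_neg, hHs_pos⟩
  obtain ⟨p₀, hp₀mem, hp₀⟩ := intermediate_value_Ioo hs_gt.le hcont hmem
  have hp₀Ioo : p₀ ∈ Set.Ioo (0:ℝ) 1 :=
    ⟨by linarith [hp₀mem.1], by linarith [hp₀mem.2]⟩
  have sub : Set.Ioo (0:ℝ) 1 ⊆ Set.Icc (0:ℝ) 1 := Set.Ioo_subset_Icc_self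
  constructor
  · refine ⟨p₀, ⟨hp₀Ioo, (key p₀ hp₀Ioo).2 hp₀⟩, ?_⟩
    intro q ⟨hqIoo, hq⟩
    have hq' : H q = 0 := (key q hqIoo).1 hq
    exact hmono.injOn (sub hqIoo) (sub hp₀Ioo) (by rw [hq', hp₀])
  · intro p hpIoo hp
    have hp' : H p = 0 := (key p hpIoo).1 hp
    constructor
    · by_contra hle
      push_neg at hle
      rcases lt_or_eq_of_le hle with h | h
      · have := hmono (sub hpIoo) ⟨by norm_num, by norm_num⟩ h
        rw [hp'] at this
        linarith
      · rw [h] at hp'; linarith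
    · by_contra hle
      push_neg at hle
      rcases lt_or_eq_of_le hle with h | h
      · have := hmono ⟨hs_pos.le, hs_lt.le⟩ (sub hpIoo) h
        rw [hp'] at this
        linarith
      · rw [h] at hHs_pos; linarith
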